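/- Let 0 < δ < 1/2 and 0 < ε < 1, and let X, X' be n×p real matrices that differ only in their first row, with Δ = X' − X ≠ 0. Consider the mechanism Y(X) = X + C where C is an n×p matrix of i.i.d. N(0, σ²) entries, and let S̄_{X,X'} = {y : p_{Y(X)}(y) > e^ε p_{Y(X')}(y)}. If P[Y(X) ∈ S̄_{X,X'}] ≤ δ, then necessarily σ ≥ ‖Δ‖ γ̄_δ / ε, where γ̄_δ is the upper δ-quantile of N(0,1) and ‖·‖ is the Frobenius norm. -/

import Mathlib

open MeasureTheory ProbabilityTheory Real

noncomputable section

/-- The space of n×p real data matrices, represented as functions. -/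
abbrev Mat (n p : ℕ) := Fin n → Fin p → ℝ

/-- Frobenius (L₂) norm of a matrix. -/
def frob {n p : ℕ} (M : Mat n p) : ℝ := Real.sqrt (∑ i, ∑ j, (M i j) ^ 2)

/-- The distribution of an n×p matrix of i.i.d. N(0, σ²) entries. -/
def gaussNoise (n p : ℕ) (σ : ℝ) : Measure (Mat n p) :=
  Measure.pi fun _ => Measure.pi fun _ => gaussianReal 0 ⟨σ ^ 2, sq_nonneg σ⟩

/-- Matrix product. -/
def mdot {n p m : ℕ} (A : Fin n → Fin p → ℝ) (B : Fin p → Fin m → ℝ) :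
    Fin n → Fin m → ℝ := fun i j => ∑ k, A i k * B k j

/-- Matrix transpose. -/
def transp {n p : ℕ} (M : Mat n p) : Mat p n := fun j i => M i j

/-- Trace of a square matrix. -/
def trace' {n : ℕ} (T : Mat n n) : ℝ := ∑ i, T i i

/-- `A` is an orthogonal matrix: A Aᵀ = I. -/
def IsOrth {n : ℕ} (A : Mat n n) : Prop :=
  mdot A (transp A) = fun i j => if i = j then (1 : ℝ) else 0

/-- Neighboring data sets: they differ in only one row and the Frobenius
norm of the difference is at most 1. -/
def Neighbors {n p : ℕ} (X X' : Mat n p) : Prop :=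
  (∃ i, ∀ k, k ≠ i → X k = X' k) ∧ frob (X - X') ≤ 1

/-- `μ` is the Haar (uniform) probability distribution on the orthogonal group O(n):
a probability measure supported on orthogonal matrices that is invariant under
left translation by any orthogonal matrix. -/
def IsHaarOrth {n : ℕ} (μ : Measure (Mat n n)) : Prop :=
  IsProbabilityMeasure μ ∧ μ {A | IsOrth A}ᶜ = 0 ∧
    ∀ Q : Mat n n, IsOrth Q → μ.map (fun A => mdot Q A) = μ

/-- The density at `y` of the Gaussian mechanism `X + C`, where `C` has
i.i.d. N(0, σ²) entries: `(2πσ²)^{−np/2} exp(−‖y − X‖²/(2σ²))`. -/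
def gaussDens {n p : ℕ} (σ : ℝ) (X y : Mat n p) : ℝ :=
  (2 * π * σ ^ 2) ^ (-(n * p : ℝ) / 2) * Real.exp (-(frob (y - X) ^ 2) / (2 * σ ^ 2))
/-- The law of the mechanism `Y(X) = X + C` (setting (A)). -/
def lawA {n p : ℕ} (σ : ℝ) (X : Mat n p) : Measure (Mat n p) :=
  (gaussNoise n p σ).map (fun c => X + c)

open scoped NNReal

/-! Translating by `X`, the event `S̄` becomes the half-space
`{c | ⟪Δ, c⟫ < (‖Δ‖² - 2εσ²) / 2}` for the noise `c`, and `⟪Δ, C⟫ ~ N(0, σ²‖Δ‖²)`.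
Hence `P[Y(X) ∈ S̄] = P[Z > εσ/‖Δ‖ - ‖Δ‖/(2σ)]` for `Z ~ N(0,1)`, and comparing with
`P[Z > γ̄_δ] = δ` gives `γ̄_δ ≤ εσ/‖Δ‖ - ‖Δ‖/(2σ) ≤ εσ/‖Δ‖`. -/

theorem map_sum_pi_gaussianReal {ι : Type*} [Fintype ι] (m : ι → ℝ) (v : ι → ℝ≥0) :
    (Measure.pi fun i => gaussianReal (m i) (v i)).map (fun x => ∑ i, x i)
      = gaussianReal (∑ i, m i) (∑ i, v i) := by
  refine Measure.ext_of_charFun (funext fun t => ?_)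
  simp only [charFun_map_sum_pi_eq_prod, Finset.prod_apply, charFun_gaussianReal,
    ← Complex.exp_sum]
  congr 1
  push_cast
  simp only [Finset.sum_sub_distrib, Finset.sum_mul, Finset.mul_sum, Finset.sum_div]

theorem map_sum_pi_eq_gaussianReal {ι : Type*} [Fintype ι] {α : ι → Type*}
    [∀ i, MeasurableSpace (α i)] (μ : ∀ i, Measure (α i)) [∀ i, IsProbabilityMeasure (μ i)]
    {f : ∀ i, α i → ℝ} (hf : ∀ i, Measurable (f i)) {m : ι → ℝ} {v : ι → ℝ≥0}
    (h : ∀ i, (μ i).map (f i) = gaussianReal (m i) (v i)) :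
    (Measure.pi μ).map (fun x => ∑ i, f i (x i)) = gaussianReal (∑ i, m i) (∑ i, v i) := by
  have hsum : (fun x : ∀ i, α i => ∑ i, f i (x i))
      = (fun y : ι → ℝ => ∑ i, y i) ∘ fun x i => f i (x i) := rfl
  have hF : Measurable fun (x : ∀ i, α i) i => f i (x i) :=
    measurable_pi_lambda _ fun i => (hf i).comp (measurable_pi_apply i)
  rw [hsum, ← Measure.map_map (by fun_prop) hF, Measure.pi_map_pi fun i => (hf i).aemeasurable]
  simp only [h, map_sum_pi_gaussianReal]

theorem gaussianReal_Iio_eq_Ioi {τ : ℝ} (hτ : 0 < τ) (s : ℝ) :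
    gaussianReal 0 (τ ^ 2).toNNReal (Set.Iio s) = gaussianReal 0 1 (Set.Ioi (-s / τ)) := by
  have h : gaussianReal 0 (τ ^ 2).toNNReal = (gaussianReal 0 1).map (-τ * ·) := by
    rw [gaussianReal_map_const_mul]
    congr 1
    · simp
    · ext; simp [Real.coe_toNNReal _ (sq_nonneg τ)]
  rw [h, Measure.map_apply (measurable_const_mul _) measurableSet_Iio]
  congr 1
  ext x
  simp only [Set.mem_preimage, Set.mem_Iio, Set.mem_Ioi, neg_mul]
  rw [neg_lt, div_lt_iff₀' hτ]

theorem gaussianReal_Ioi_lt_Ioi {μ : ℝ} {v : ℝ≥0} (hv : v ≠ 0) {a b : ℝ} (hab : a < b) :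
    gaussianReal μ v (Set.Ioi b) < gaussianReal μ v (Set.Ioi a) := by
  have hIoc : gaussianReal μ v (Set.Ioc a b) ≠ 0 := fun h =>
    hab.not_ge (by simpa using gaussianReal_absolutelyContinuous' μ hv h)
  rw [← Set.Ioc_union_Ioi_eq_Ioi hab.le,
    measure_union (Set.Ioc_disjoint_Ioi le_rfl) measurableSet_Ioi, add_comm]
  exact ENNReal.lt_add_right (measure_ne_top _ _) hIoc

section Frobenius

variable {n p : ℕ}

def frobInner (A B : Mat n p) : ℝ := ∑ i, ∑ j, A i j * B i j

theorem frob_sq (M : Mat n p) : frob M ^ 2 = ∑ i, ∑ j, M i j ^ 2 :=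
  Real.sq_sqrt (by positivity)

theorem frob_pos {M : Mat n p} (hM : M ≠ 0) : 0 < frob M := by
  obtain ⟨i, j, hij⟩ : ∃ i j, M i j ≠ 0 := by
    by_contra! h
    exact hM (funext fun i => funext (h i))
  refine Real.sqrt_pos.mpr (Finset.sum_pos' (fun _ _ => by positivity) ⟨i, Finset.mem_univ _, ?_⟩)
  exact Finset.sum_pos' (fun _ _ => by positivity) ⟨j, Finset.mem_univ _, by positivity⟩

theorem frob_sub_sq (A B : Mat n p) :
    frob (A - B) ^ 2 = frob A ^ 2 - 2 * frobInner B A + frob B ^ 2 := by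
  simp only [frob_sq, frobInner, Pi.sub_apply, Finset.mul_sum, ← Finset.sum_sub_distrib,
    ← Finset.sum_add_distrib]
  exact Finset.sum_congr rfl fun i _ => Finset.sum_congr rfl fun j _ => by ring

theorem measurable_frobInner (A : Mat n p) : Measurable (frobInner A) := by
  unfold frobInner
  fun_prop

theorem measurable_gaussDens (σ : ℝ) (X : Mat n p) : Measurable (gaussDens σ X) := by
  unfold gaussDens frob
  fun_prop

theorem map_frobInner_pi_gaussianReal (v : ℝ≥0) (A : Mat n p) :
    (Measure.pi fun _ : Fin n => Measure.pi fun _ : Fin p => gaussianReal 0 v).map (frobInner A)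
      = gaussianReal 0 ((frob A ^ 2).toNNReal * v) := by
  have hrow (i : Fin n) := map_sum_pi_eq_gaussianReal (fun _ : Fin p => gaussianReal 0 v)
    (fun j => measurable_const_mul (A i j)) (fun j => gaussianReal_map_const_mul (A i j))
  refine (map_sum_pi_eq_gaussianReal _ (fun i => by fun_prop) hrow).trans ?_
  congr 1
  · simp
  · ext
    rw [NNReal.coe_mul, Real.coe_toNNReal _ (sq_nonneg _), frob_sq]
    simp [Finset.sum_mul]

theorem gaussNoise_map_frobInner (σ : ℝ) (A : Mat n p) :
    (gaussNoise n p σ).map (frobInner A) = gaussianReal 0 ((σ * frob A) ^ 2).toNNReal := by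
  refine (map_frobInner_pi_gaussianReal ⟨σ ^ 2, sq_nonneg σ⟩ A).trans ?_
  congr 1
  ext
  -- `gaussNoise` writes its variance as a bare subtype constructor, on which the `NNReal`
  -- coercion lemmas do not fire.
  show ((frob A ^ 2).toNNReal : ℝ) * σ ^ 2 = ((σ * frob A) ^ 2).toNNReal
  rw [Real.coe_toNNReal _ (sq_nonneg _), Real.coe_toNNReal _ (sq_nonneg _)]
  ring

end Frobenius

section PrivacyLoss

variable {n p : ℕ}

theorem preimage_add_privacyLossSet {σ : ℝ} (hσ : σ ≠ 0) (ε : ℝ) (X X' : Mat n p) :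
    (X + ·) ⁻¹' {y | gaussDens σ X y > Real.exp ε * gaussDens σ X' y}
      = frobInner (X' - X) ⁻¹' Set.Iio ((frob (X' - X) ^ 2 - 2 * ε * σ ^ 2) / 2) := by
  ext c
  have hA : 0 < (2 * π * σ ^ 2) ^ (-(n * p : ℝ) / 2) := by positivity
  have hX' : X + c - X' = c - (X' - X) := by abel
  simp only [Set.mem_preimage, Set.mem_ofPred_eq, Set.mem_Iio, gt_iff_lt, gaussDens,
    add_sub_cancel_left, hX']
  rw [mul_left_comm, mul_lt_mul_iff_right₀ hA, ← Real.exp_add, Real.exp_lt_exp, frob_sub_sq,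
    ← sub_pos, ← sub_pos (b := frobInner _ _)]
  have key : -frob c ^ 2 / (2 * σ ^ 2)
      - (ε + -(frob c ^ 2 - 2 * frobInner (X' - X) c + frob (X' - X) ^ 2) / (2 * σ ^ 2))
      = ((frob (X' - X) ^ 2 - 2 * ε * σ ^ 2) / 2 - frobInner (X' - X) c) / σ ^ 2 := by
    field_simp
    ring
  rw [key, div_pos_iff_of_pos_right (by positivity)]

theorem lawA_privacyLossSet {σ : ℝ} (hσ : 0 < σ) (ε : ℝ) {X X' : Mat n p} (hne : X ≠ X') :
    lawA σ X {y | gaussDens σ X y > Real.exp ε * gaussDens σ X' y}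
      = gaussianReal 0 1 (Set.Ioi (ε * σ / frob (X' - X) - frob (X' - X) / (2 * σ))) := by
  have hF : 0 < frob (X' - X) := frob_pos (sub_ne_zero.mpr hne.symm)
  have hS : MeasurableSet {y | gaussDens σ X y > Real.exp ε * gaussDens σ X' y} :=
    measurableSet_lt ((measurable_gaussDens σ X').const_mul _) (measurable_gaussDens σ X)
  rw [lawA, Measure.map_apply (measurable_const_add X) hS, preimage_add_privacyLossSet hσ.ne',
    ← Measure.map_apply (measurable_frobInner _) measurableSet_Iio, gaussNoise_map_frobInner,
    gaussianReal_Iio_eq_Ioi (mul_pos hσ hF)]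
  congr 2
  field_simp
  ring

end PrivacyLoss

theorem stmt7_general {n p : ℕ} (σ ε δ γ : ℝ) (hσ : 0 < σ) (hε0 : 0 < ε)
    (hγ : gaussianReal 0 1 (Set.Ioi γ) = ENNReal.ofReal δ)
    (X X' : Mat n p)
    (hne : X ≠ X')
    (hP : lawA σ X {y | gaussDens σ X y > Real.exp ε * gaussDens σ X' y}
        ≤ ENNReal.ofReal δ) :
    σ ≥ frob (X' - X) * γ / ε := by
  set F := frob (X' - X)
  have hF : 0 < F := frob_pos (sub_ne_zero.mpr hne.symm)
  have hγ_le : γ ≤ ε * σ / F - F / (2 * σ) := by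
    by_contra! h
    refine (gaussianReal_Ioi_lt_Ioi (μ := 0) one_ne_zero h).not_ge ?_
    rwa [← lawA_privacyLossSet hσ ε hne, hγ]
  have hshift : 0 ≤ F / (2 * σ) := by positivity
  rw [ge_iff_le, div_le_iff₀ hε0]
  calc F * γ ≤ F * (ε * σ / F) := by gcongr; linarith
    _ = σ * ε := by field_simp

/-- Let `0 < δ < 1/2`, `0 < ε < 1`, and let `X, X'` differ only in
their first row with `Δ = X' − X ≠ 0`. Consider `Y(X) = X + C` with `C` i.i.d.
N(0, σ²) entries and `S̄_{X,X'} = {y : p_{Y(X)}(y) > e^ε p_{Y(X')}(y)}`. If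
`P[Y(X) ∈ S̄_{X,X'}] ≤ δ`, then necessarily `σ ≥ ‖Δ‖ γ̄_δ / ε`, with `γ̄_δ` the upper
δ-quantile of N(0,1). -/
theorem stmt7 {n p : ℕ} (hn : 0 < n) (σ ε δ γ : ℝ) (hσ : 0 < σ)
    (hδ0 : 0 < δ) (hδ : δ < 1 / 2) (hε0 : 0 < ε) (hε : ε < 1)
    (hγ : gaussianReal 0 1 (Set.Ioi γ) = ENNReal.ofReal δ)
    (X X' : Mat n p)
    (hrow : ∀ k : Fin n, k ≠ ⟨0, hn⟩ → X k = X' k)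
    (hne : X ≠ X')
    (hP : lawA σ X {y | gaussDens σ X y > Real.exp ε * gaussDens σ X' y}
        ≤ ENNReal.ofReal δ) :
    σ ≥ frob (X' - X) * γ / ε :=
  stmt7_general σ ε δ γ hσ hε0 hγ X X' hne hP
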